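/- Let A and B be skew shapes. The following three conditions are equivalent: (i) rows_k(A) ⊴ rows_k(B) for all k ≥ 1; (ii) cols_l(A) ⊴ cols_l(B) for all l ≥ 1; (iii) rects_{k,l}(A) ≤ rects_{k,l}(B) for all k, l ≥ 1. -/

import Mathlib

open Finset

/-- The weakly decreasing rearrangement of a finite sequence (list) of natural numbers,
i.e. the partition obtained by sorting its parts into weakly decreasing order. -/
def sortDesc (l : List ℕ) : List ℕ := l.mergeSort (fun a b => b ≤ a)

/-- The (extended) dominance order on partitions, represented as weakly decreasing lists
of natural numbers (parts beyond the length of the list are taken to be `0`):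
`Dom a b` means `a ⊴ b`, i.e. `a₁ + ⋯ + a_k ≤ b₁ + ⋯ + b_k` for all `k`. -/
def Dom (a b : List ℕ) : Prop := ∀ k : ℕ, (a.take k).sum ≤ (b.take k).sum

/-- The conjugate (transpose) of a partition given as a list of natural numbers:
the `j`-th entry (0-indexed) is the number of parts that are `> j`. -/
def conj (l : List ℕ) : List ℕ :=
  (List.range (l.foldr max 0)).map (fun j => (l.filter (fun x => j < x)).length)

/-- A skew shape `λ/μ`: a pair of Young diagrams `μ ⊆ λ`. -/
structure SkewShape where
  outer : YoungDiagram
  inner : YoungDiagram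
  le : inner ≤ outer

namespace SkewShape

/-- The cells (boxes) of a skew shape: boxes of the outer diagram not in the inner one. -/
def cells (A : SkewShape) : Finset (ℕ × ℕ) := A.outer.cells \ A.inner.cells

/-- The number of rows of (the outer shape of) a skew shape. -/
def numRows (A : SkewShape) : ℕ := A.outer.colLen 0

/-- The number of columns of (the outer shape of) a skew shape. -/
def numCols (A : SkewShape) : ℕ := A.outer.rowLen 0

/-- `A.overlap k i` is the number of columns occupied in common by the `k` consecutive
rows `i, i+1, …, i+k-1` of the skew shape `A` (rows indexed from 0). -/
def overlap (A : SkewShape) (k i : ℕ) : ℕ :=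
  ((Finset.range A.numCols).filter (fun j => ∀ t, t < k → (i + t, j) ∈ A.cells)).card

/-- `rows_k(A)`: the weakly decreasing rearrangement of the row-overlap numbers
`(overlap k 0, overlap k 1, …)`; zero parts are discarded (a partition is identified
with its zero-padded versions).  `A.rowsK 1` is the partition of row lengths of `A`. -/
def rowsK (A : SkewShape) (k : ℕ) : List ℕ :=
  sortDesc (((List.range (A.numRows + 1 - k)).map (A.overlap k)).filter (fun x => 0 < x))

/-- The transpose (conjugate) of a skew shape. -/
def transpose (A : SkewShape) : SkewShape :=
  ⟨A.outer.transpose, A.inner.transpose, YoungDiagram.transpose_mono A.le⟩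

/-- `cols_l(A)`: the weakly decreasing rearrangement of the column-overlap numbers of `A`;
`A.colsK 1` is the partition of column lengths of `A`. -/
def colsK (A : SkewShape) (l : ℕ) : List ℕ := A.transpose.rowsK l

/-- `rects k l A` is the number of `k × l` rectangular subdiagrams (contiguous `k × l`
blocks of boxes) contained inside the skew shape `A`, recorded by the position of
their top-left corner. -/
def rects (A : SkewShape) (k l : ℕ) : ℕ :=
  (((Finset.range A.numRows) ×ˢ (Finset.range A.numCols)).filter
    (fun p => ∀ t, t < k → ∀ u, u < l → (p.1 + t, p.2 + u) ∈ A.cells)).card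

end SkewShape

/-- A semistandard Young tableau of skew shape `A`: a filling of the boxes of `A`
with positive integers, weakly increasing along rows and strictly increasing down
columns (entries outside `A` are recorded as `0`). -/
structure SkewSsyt (A : SkewShape) where
  entry : ℕ → ℕ → ℕ
  pos : ∀ i j, (i, j) ∈ A.cells → 1 ≤ entry i j
  zeros : ∀ i j, (i, j) ∉ A.cells → entry i j = 0
  row_weak : ∀ i j1 j2, j1 ≤ j2 → (i, j1) ∈ A.cells → (i, j2) ∈ A.cells →
      entry i j1 ≤ entry i j2
  col_strict : ∀ i1 i2 j, i1 < i2 → (i1, j) ∈ A.cells → (i2, j) ∈ A.cells →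
      entry i1 j < entry i2 j

/-- The number of boxes of `T` filled with the entry `v`. -/
def contentCount {A : SkewShape} (T : SkewSsyt A) (v : ℕ) : ℕ :=
  (A.cells.filter (fun c => T.entry c.1 c.2 = v)).card

/-- `T` has content `ν` (a partition written as a list, 0-indexed: `ν.getD v 0` is the
`(v+1)`-st part): the number of entries equal to `v + 1` is the `(v+1)`-st part of `ν`. -/
def HasContent {A : SkewShape} (T : SkewSsyt A) (ν : List ℕ) : Prop :=
  ∀ v : ℕ, contentCount T (v + 1) = ν.getD v 0

/-- `readBefore c c'` : the box `c` comes strictly before the box `c'` in the reverse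
reading order (rows top to bottom, each row read right to left). -/
def readBefore (c c' : ℕ × ℕ) : Prop := c.1 < c'.1 ∨ (c.1 = c'.1 ∧ c'.2 < c.2)

instance (c c' : ℕ × ℕ) : Decidable (readBefore c c') := by
  unfold readBefore; infer_instance

/-- `T` is a Littlewood–Richardson filling: its reverse reading word is a lattice word,
i.e. at every box `c` carrying an entry `v + 2`, the number of occurrences of `v + 2`
read so far (weakly up to `c`) is at most the number of occurrences of `v + 1` read
strictly before `c`. -/
def IsLR {A : SkewShape} (T : SkewSsyt A) : Prop :=
  ∀ c ∈ A.cells, ∀ v : ℕ, T.entry c.1 c.2 = v + 2 →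
    (A.cells.filter (fun c' => T.entry c'.1 c'.2 = v + 2 ∧ (readBefore c' c ∨ c' = c))).card ≤
    (A.cells.filter (fun c' => T.entry c'.1 c'.2 = v + 1 ∧ readBefore c' c)).card

/-- The support of the skew Schur function `s_A`: by the Littlewood–Richardson rule,
the set of partitions `ν` (weakly decreasing lists) admitting an LR filling of `A`
of content `ν`, i.e. those `ν` with `s_ν` appearing with nonzero coefficient in `s_A`. -/
def SkewShape.support (A : SkewShape) : Set (List ℕ) :=
  { ν | ν.Pairwise (· ≥ ·) ∧ ∃ T : SkewSsyt A, IsLR T ∧ HasContent T ν }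

/-- The coefficient of the Schur function `s_ν` in the Schur expansion of `s_A`:
by the Littlewood–Richardson rule, the number of LR fillings of `A` of content `ν`. -/
noncomputable def lrCoeff (A : SkewShape) (ν : List ℕ) : ℕ :=
  Nat.card { T : SkewSsyt A // IsLR T ∧ HasContent T ν }

/-- `s_A − s_B` is Schur-positive: every coefficient in the Schur expansion of the
difference is nonnegative, i.e. (by the LR rule) each LR coefficient of `B` is at most
the corresponding one of `A`. -/
def SchurPositiveDiff (A B : SkewShape) : Prop :=
  ∀ ν : List ℕ, ν.Pairwise (· ≥ ·) → lrCoeff B ν ≤ lrCoeff A ν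

/-- The skew Schur function `s_A = Σ_T x^T`, as a formal power series in the variables
`x_0, x_1, x_2, …` (variable `x_v` recording entries equal to `v + 1`): the coefficient
of the monomial with exponents `d` is the number of SSYT of shape `A` and content `d`. -/
noncomputable def skewSchur (A : SkewShape) : MvPowerSeries ℕ ℤ :=
  fun d => (Nat.card { T : SkewSsyt A // ∀ v : ℕ, contentCount T (v + 1) = d v } : ℤ)

/-- The boxes remaining after deleting the top box of every non-empty column of `A`:
a box survives iff there is a box of `A` directly above it. -/
def trimCells (A : SkewShape) : Finset (ℕ × ℕ) :=
  A.cells.filter (fun c => 1 ≤ c.1 ∧ (c.1 - 1, c.2) ∈ A.cells)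

/-- The set of boxes of the skew shape `A ∗ B`, obtained by positioning `B` immediately
below and to the left of `A` so that `A` and `B` share no common row or column. -/
def starCells (A B : SkewShape) : Finset (ℕ × ℕ) :=
  A.cells.image (fun c => (c.1, c.2 + B.numCols)) ∪
    B.cells.image (fun c => (c.1 + A.numRows, c.2))

/-- The straight shape (partition) `μ`, viewed as the skew shape `μ/(0)`. -/
def ofYD (μ : YoungDiagram) : SkewShape := ⟨μ, ⊥, bot_le⟩

/-- The list of parts `(μ_k, μ_{k+1}, …, μ_l)` (1-indexed) of a partition `μ` given as a
Young diagram, parts beyond the length of `μ` being `0`. -/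
def tailParts (μ : YoungDiagram) (k l : ℕ) : List ℕ :=
  (List.range (l + 1 - k)).map (fun t => μ.rowLen (k - 1 + t))

/-! Dominance of partitions `a ⊴ b` is equivalent to `∑ (aᵢ - m) ≤ ∑ (bᵢ - m)` for every `m`
(truncated subtraction), since `a₁ + ⋯ + a_k = min_m (k m + ∑ (aᵢ - m))`. The number of
`k × (m + 1)` rectangles of a skew shape with top row `i` is `overlap_k(i) - m`, because
`λ` and `μ` are weakly decreasing, so the columns shared by rows `i, …, i + k - 1` form an
interval; hence `rects_{k, m+1}(A) = ∑ (rows_k(A)ᵢ - m)`, and the equivalence of (i) and (iii)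
follows. Transposition exchanges `rows` with `cols` and `rects_{k,l}` with `rects_{l,k}`. -/

namespace List

theorem sum_map_tsub_eq_zero {l : List ℕ} {m : ℕ} (h : ∀ x ∈ l, x ≤ m) :
    (l.map (· - m)).sum = 0 :=
  sum_eq_zero fun y hy => by
    obtain ⟨x, hx, rfl⟩ := mem_map.mp hy
    exact Nat.sub_eq_zero_of_le (h x hx)

theorem sum_take_le_mul_add_sum_map_tsub (a : List ℕ) (k m : ℕ) :
    (a.take k).sum ≤ k * m + (a.map (· - m)).sum := by
  induction a generalizing k with
  | nil => simp
  | cons x t ih =>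
    cases k with
    | zero => simp
    | succ k =>
      have hx : x ≤ m + (x - m) := le_add_tsub
      simp only [take_succ_cons, sum_cons, map_cons]
      linarith [ih k, Nat.succ_mul k m]

theorem exists_sum_take_eq_mul_add_sum_map_tsub {a : List ℕ} (ha : a.Pairwise (· ≥ ·))
    (m : ℕ) : ∃ k, (a.take k).sum = k * m + (a.map (· - m)).sum := by
  induction a with
  | nil => exact ⟨0, by simp⟩
  | cons x t ih =>
    obtain ⟨hxt, ht⟩ := pairwise_cons.mp ha
    by_cases hxm : x ≤ m
    · refine ⟨0, ?_⟩
      rw [sum_map_tsub_eq_zero fun y hy => ?_]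
      · simp
      · rcases mem_cons.mp hy with rfl | hy
        exacts [hxm, (hxt y hy).trans hxm]
    · obtain ⟨k, hk⟩ := ih ht
      refine ⟨k + 1, ?_⟩
      simp only [take_succ_cons, sum_cons, map_cons, hk]
      have : x = m + (x - m) := by omega
      linarith [Nat.succ_mul k m]

theorem sum_take_eq_mul_getD_add_sum_map_tsub {a : List ℕ} (ha : a.Pairwise (· ≥ ·)) (k : ℕ) :
    (a.take k).sum = k * a.getD k 0 + (a.map (· - a.getD k 0)).sum := by
  induction a generalizing k with
  | nil => simp
  | cons x t ih =>
    obtain ⟨hxt, ht⟩ := pairwise_cons.mp ha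
    cases k with
    | zero =>
      rw [sum_map_tsub_eq_zero fun y hy => ?_]
      · simp
      · rcases mem_cons.mp hy with rfl | hy
        exacts [le_rfl, hxt y hy]
    | succ k =>
      have hkx : t.getD k 0 ≤ x := by
        rcases lt_or_ge k t.length with hk | hk
        · rw [getD_eq_getElem _ _ hk]
          exact hxt _ (getElem_mem hk)
        · rw [getD_eq_default _ _ hk]
          exact Nat.zero_le x
      simp only [take_succ_cons, sum_cons, map_cons, getD_cons_succ, ih ht k]
      have : x = t.getD k 0 + (x - t.getD k 0) := by omega
      linarith [Nat.succ_mul k (t.getD k 0)]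

theorem sum_map_tsub_filter_pos (l : List ℕ) (m : ℕ) :
    ((l.filter (0 < ·)).map (· - m)).sum = (l.map (· - m)).sum := by
  rw [← sum_map_filter_add_sum_map_filter_not (0 < ·) _ l, left_eq_add]
  exact sum_map_tsub_eq_zero fun x hx => by
    simp only [not_lt, nonpos_iff_eq_zero, mem_filter, decide_eq_true_eq] at hx
    omega

end List

theorem dom_iff_forall_sum_map_tsub_le {a b : List ℕ} (ha : a.Pairwise (· ≥ ·))
    (hb : b.Pairwise (· ≥ ·)) :
    Dom a b ↔ ∀ m, (a.map (· - m)).sum ≤ (b.map (· - m)).sum := by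
  constructor
  · intro h m
    obtain ⟨k, hk⟩ := List.exists_sum_take_eq_mul_add_sum_map_tsub ha m
    linarith [h k, List.sum_take_le_mul_add_sum_map_tsub b k m]
  · intro h k
    calc (a.take k).sum ≤ k * b.getD k 0 + (a.map (· - b.getD k 0)).sum :=
          List.sum_take_le_mul_add_sum_map_tsub a k _
      _ ≤ k * b.getD k 0 + (b.map (· - b.getD k 0)).sum := Nat.add_le_add_left (h _) _
      _ = (b.take k).sum := (List.sum_take_eq_mul_getD_add_sum_map_tsub hb k).symm

theorem sortDesc_pairwise (l : List ℕ) : (sortDesc l).Pairwise (· ≥ ·) :=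
  List.pairwise_mergeSort' (· ≥ ·) l

namespace SkewShape

section

variable (A : SkewShape)

theorem mem_cells_iff {r c : ℕ} :
    (r, c) ∈ A.cells ↔ A.inner.rowLen r ≤ c ∧ c < A.outer.rowLen r := by
  rw [cells, Finset.mem_sdiff, YoungDiagram.mem_cells, YoungDiagram.mem_cells,
    YoungDiagram.mem_iff_lt_rowLen, YoungDiagram.mem_iff_lt_rowLen]
  omega

theorem mem_transpose_cells {c : ℕ × ℕ} : c ∈ A.transpose.cells ↔ c.swap ∈ A.cells := by
  simp only [cells, transpose, Finset.mem_sdiff, YoungDiagram.mem_cells,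
    YoungDiagram.mem_transpose]

theorem outer_rowLen_eq_zero {r : ℕ} (hr : A.numRows ≤ r) : A.outer.rowLen r = 0 := by
  by_contra h
  have := YoungDiagram.mem_iff_lt_colLen.mp
    (YoungDiagram.mem_iff_lt_rowLen.mpr (Nat.pos_of_ne_zero h))
  exact absurd hr (by rw [numRows]; omega)

theorem forall_lt_succ_mem_cells_iff (k i j : ℕ) :
    (∀ t, t < k + 1 → (i + t, j) ∈ A.cells) ↔
      j ∈ Finset.Ico (A.inner.rowLen i) (A.outer.rowLen (i + k)) := by
  rw [Finset.mem_Ico]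
  constructor
  · intro h
    exact ⟨((A.mem_cells_iff).1 (h 0 k.succ_pos)).1, ((A.mem_cells_iff).1 (h k k.lt_succ_self)).2⟩
  · rintro ⟨hin, hout⟩ t ht
    rw [mem_cells_iff]
    exact ⟨(A.inner.rowLen_anti i (i + t) (Nat.le_add_right i t)).trans hin,
      hout.trans_le (A.outer.rowLen_anti (i + t) (i + k) (by omega))⟩

theorem overlap_succ (k i : ℕ) :
    A.overlap (k + 1) i = A.outer.rowLen (i + k) - A.inner.rowLen i := by
  have hsub : Finset.Ico (A.inner.rowLen i) (A.outer.rowLen (i + k)) ⊆ Finset.range A.numCols :=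
    fun j hj => Finset.mem_range.2
      ((Finset.mem_Ico.1 hj).2.trans_le (A.outer.rowLen_anti 0 (i + k) (Nat.zero_le _)))
  rw [overlap, Finset.filter_congr fun j _ => A.forall_lt_succ_mem_cells_iff k i j,
    Finset.filter_mem_eq_inter, Finset.inter_eq_right.2 hsub, Nat.card_Ico]

theorem card_filter_rectangle_in_row (k m i : ℕ) :
    ((Finset.range A.numCols).filter
      fun j => ∀ t, t < k + 1 → ∀ u, u < m + 1 → (i + t, j + u) ∈ A.cells).card =
      A.overlap (k + 1) i - m := by
  have hrow : ∀ j, (∀ t, t < k + 1 → ∀ u, u < m + 1 → (i + t, j + u) ∈ A.cells) ↔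
      j ∈ Finset.Ico (A.inner.rowLen i) (A.outer.rowLen (i + k) - m) := by
    intro j
    simp only [Finset.mem_Ico]
    constructor
    · intro h
      have h0 := (A.forall_lt_succ_mem_cells_iff k i (j + 0)).1 fun t ht => h t ht 0 m.succ_pos
      have hm := (A.forall_lt_succ_mem_cells_iff k i (j + m)).1 fun t ht => h t ht m m.lt_succ_self
      simp only [Finset.mem_Ico] at h0 hm
      omega
    · intro hj t ht u hu
      refine (A.forall_lt_succ_mem_cells_iff k i (j + u)).2 ?_ t ht
      simp only [Finset.mem_Ico]
      omega
  have hsub : Finset.Ico (A.inner.rowLen i) (A.outer.rowLen (i + k) - m) ⊆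
      Finset.range A.numCols :=
    fun j hj => Finset.mem_range.2 ((Finset.mem_Ico.1 hj).2.trans_le
      (tsub_le_self.trans (A.outer.rowLen_anti 0 (i + k) (Nat.zero_le _))))
  rw [Finset.filter_congr fun j _ => hrow j, Finset.filter_mem_eq_inter,
    Finset.inter_eq_right.2 hsub, Nat.card_Ico, overlap_succ]
  omega

theorem rects_succ_succ (k m : ℕ) :
    A.rects (k + 1) (m + 1) = ∑ i ∈ Finset.range (A.numRows - k), (A.overlap (k + 1) i - m) := by
  rw [rects, Finset.card_filter, Finset.sum_product]
  simp only [← Finset.card_filter, card_filter_rectangle_in_row]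
  refine (Finset.sum_subset (Finset.range_mono (Nat.sub_le _ _)) fun i _ hi => ?_).symm
  rw [Finset.mem_range, not_lt] at hi
  rw [overlap_succ, A.outer_rowLen_eq_zero (by omega), Nat.zero_sub, Nat.zero_sub]

theorem rects_succ_succ_eq_sum_rowsK (k m : ℕ) :
    A.rects (k + 1) (m + 1) = ((A.rowsK (k + 1)).map (· - m)).sum := by
  rw [rects_succ_succ, rowsK, sortDesc, ((List.mergeSort_perm _ _).map _).sum_eq,
    List.sum_map_tsub_filter_pos, Nat.add_sub_add_right, List.map_map, ← List.toFinset_range,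
    List.sum_toFinset _ List.nodup_range]
  rfl

theorem numRows_transpose : A.transpose.numRows = A.numCols :=
  YoungDiagram.colLen_transpose _ _

theorem numCols_transpose : A.transpose.numCols = A.numRows :=
  YoungDiagram.rowLen_transpose _ _

theorem rects_transpose (k l : ℕ) : A.transpose.rects l k = A.rects k l := by
  rw [rects, rects, Finset.card_filter, Finset.card_filter, Finset.sum_product,
    Finset.sum_product, Finset.sum_comm, numRows_transpose, numCols_transpose]
  refine Finset.sum_congr rfl fun i _ => Finset.sum_congr rfl fun j _ => if_congr ?_ rfl rfl
  simp only [mem_transpose_cells, Prod.swap_prod_mk]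
  exact ⟨fun h t ht u hu => h u hu t ht, fun h t ht u hu => h u hu t ht⟩

end

theorem forall_dom_rowsK_iff_forall_rects_le (A B : SkewShape) :
    (∀ k, 1 ≤ k → Dom (A.rowsK k) (B.rowsK k)) ↔
      ∀ k l, 1 ≤ k → 1 ≤ l → A.rects k l ≤ B.rects k l := by
  have key : ∀ k, Dom (A.rowsK (k + 1)) (B.rowsK (k + 1)) ↔
      ∀ m, A.rects (k + 1) (m + 1) ≤ B.rects (k + 1) (m + 1) := fun k => by
    simp only [rects_succ_succ_eq_sum_rowsK]
    exact dom_iff_forall_sum_map_tsub_le (sortDesc_pairwise _) (sortDesc_pairwise _)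
  constructor
  · intro h k l hk hl
    obtain ⟨k, rfl⟩ := Nat.exists_eq_add_of_le' hk
    obtain ⟨m, rfl⟩ := Nat.exists_eq_add_of_le' hl
    exact (key k).1 (h _ hk) m
  · intro h k hk
    obtain ⟨k, rfl⟩ := Nat.exists_eq_add_of_le' hk
    exact (key k).2 fun m => h _ _ hk (Nat.le_add_left 1 m)

theorem forall_dom_colsK_iff_forall_rects_le (A B : SkewShape) :
    (∀ l, 1 ≤ l → Dom (A.colsK l) (B.colsK l)) ↔
      ∀ k l, 1 ≤ k → 1 ≤ l → A.rects k l ≤ B.rects k l := by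
  simp only [colsK, forall_dom_rowsK_iff_forall_rects_le, rects_transpose]
  exact ⟨fun h k l hk hl => h l k hl hk, fun h k l hk hl => h l k hl hk⟩

end SkewShape

/-- the equivalence in Proposition `pro:3measures`.
Let `A` and `B` be skew shapes.  The following three conditions are equivalent:
(i) `rows_k(A) ⊴ rows_k(B)` for all `k ≥ 1`;
(ii) `cols_l(A) ⊴ cols_l(B)` for all `l ≥ 1`;
(iii) `rects_{k,l}(A) ≤ rects_{k,l}(B)` for all `k, l ≥ 1`. -/
theorem rowsK_dom_iff_colsL_dom_iff_rects_le (A B : SkewShape) :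
    ((∀ k, 1 ≤ k → Dom (A.rowsK k) (B.rowsK k)) ↔
      (∀ l, 1 ≤ l → Dom (A.colsK l) (B.colsK l))) ∧
    ((∀ k, 1 ≤ k → Dom (A.rowsK k) (B.rowsK k)) ↔
      (∀ k l, 1 ≤ k → 1 ≤ l → A.rects k l ≤ B.rects k l)) :=
  ⟨(A.forall_dom_rowsK_iff_forall_rects_le B).trans
      (A.forall_dom_colsK_iff_forall_rects_le B).symm,
    A.forall_dom_rowsK_iff_forall_rects_le B⟩
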